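/- Let X be a uniformly convex complex Banach space, x ∈ B_X, P_x : X → X a norm-one projection onto span_ℂ(x), and 0 < ρ ≤ 1/2. Then for every y ∈ B_X one has ‖T_{ρ,x}(y)‖ ≤ ‖y‖ − ‖y‖ · δ(2ρ‖y − P_x(y)‖), where δ is the modulus of convexity of X. -/

import Mathlib

open Filter Topology Metric

/-- The weighted ("v-") norm: `sup_{‖x‖<1} (1 - ‖x‖²)‖f x‖`. -/
noncomputable def vNorm {X Y : Type*} [NormedAddCommGroup X] [NormedAddCommGroup Y]
    (f : X → Y) : ℝ :=
  sSup ((fun x => (1 - ‖x‖ ^ 2) * ‖f x‖) '' {x : X | ‖x‖ < 1})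

/-- The `s`-norm: `sup_{‖x‖<1} ‖f (s • x)‖`. -/
noncomputable def sNorm {X Y : Type*} [NormedAddCommGroup X] [NormedSpace ℂ X]
    [NormedAddCommGroup Y] (s : ℝ) (f : X → Y) : ℝ :=
  sSup ((fun x => ‖f ((s : ℂ) • x)‖) '' {x : X | ‖x‖ < 1})

/-- The supremum norm over the open unit ball. -/
noncomputable def supNorm {X Y : Type*} [NormedAddCommGroup X] [NormedAddCommGroup Y]
    (f : X → Y) : ℝ :=
  sSup ((fun x => ‖f x‖) '' {x : X | ‖x‖ < 1})

/-- `P` is a continuous `N`-homogeneous polynomial: `P x = A(x, …, x)` for a continuous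
`N`-linear map `A`. -/
def IsHomPoly {X Y : Type*} [NormedAddCommGroup X] [NormedSpace ℂ X]
    [NormedAddCommGroup Y] [NormedSpace ℂ Y] (N : ℕ) (P : X → Y) : Prop :=
  ∃ A : ContinuousMultilinearMap ℂ (fun _ : Fin N => X) Y, ∀ x, P x = A (fun _ => x)

/-- `P` is a polynomial of degree at most `N`: a sum of continuous `k`-homogeneous
polynomials for `k = 0, …, N`. -/
def IsPolyDeg {X Y : Type*} [NormedAddCommGroup X] [NormedSpace ℂ X]
    [NormedAddCommGroup Y] [NormedSpace ℂ Y] (N : ℕ) (P : X → Y) : Prop :=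
  ∃ Pk : ℕ → X → Y, (∀ k, k ≤ N → IsHomPoly k (Pk k)) ∧
    ∀ x, P x = ∑ k ∈ Finset.range (N + 1), Pk k x

/-- `f` attains its `s`-norm. -/
def AttainsS {X Y : Type*} [NormedAddCommGroup X] [NormedSpace ℂ X]
    [NormedAddCommGroup Y] (s : ℝ) (f : X → Y) : Prop :=
  ∃ x₀ : X, ‖x₀‖ ≤ s ∧ ‖f x₀‖ = sNorm s f

/-- `f` attains its `v`-norm. -/
def AttainsV {X Y : Type*} [NormedAddCommGroup X] [NormedAddCommGroup Y]
    (f : X → Y) : Prop :=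
  ∃ x₀ : X, ‖x₀‖ ≤ 1 ∧ (1 - ‖x₀‖ ^ 2) * ‖f x₀‖ = vNorm f

/-- The modulus of convexity `δ(t) = inf {1 - ‖(u+v)/2‖ : ‖u‖ ≤ 1, ‖v‖ ≤ 1, ‖u - v‖ ≥ t}`. -/
noncomputable def modConv (X : Type*) [NormedAddCommGroup X] (t : ℝ) : ℝ :=
  sInf ((fun p : X × X => 1 - ‖p.1 + p.2‖ / 2) ''
    {p : X × X | ‖p.1‖ ≤ 1 ∧ ‖p.2‖ ≤ 1 ∧ t ≤ ‖p.1 - p.2‖})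

/-- `μ(ρ) = ρ² δ(2ρ²)² / 16`. -/
noncomputable def muConv (X : Type*) [NormedAddCommGroup X] (ρ : ℝ) : ℝ :=
  ρ ^ 2 * modConv X (2 * ρ ^ 2) ^ 2 / 16

lemma modConv_le_of_mem {X : Type*} [NormedAddCommGroup X] {t : ℝ} {u v : X}
    (hu : ‖u‖ ≤ 1) (hv : ‖v‖ ≤ 1) (ht : t ≤ ‖u - v‖) :
    modConv X t ≤ 1 - ‖u + v‖ / 2 := by
  apply csInf_le
  · refine ⟨0, ?_⟩
    rintro _ ⟨p, ⟨h1, h2, _⟩, rfl⟩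
    have := norm_add_le p.1 p.2
    simp only
    linarith
  · exact ⟨(u, v), ⟨hu, hv, ht⟩, rfl⟩

/-- `‖T_{ρ,x}(y)‖ ≤ ‖y‖ - ‖y‖ δ(2ρ‖y - P_x(y)‖)` on the open unit ball,
where `δ` is the modulus of convexity. -/
theorem stmt15 {X : Type*} [NormedAddCommGroup X] [NormedSpace ℂ X] [CompleteSpace X]
    [UniformConvexSpace X]
    (x : X) (hx : ‖x‖ < 1)
    (Px : X →L[ℂ] X) (hidem : ∀ y, Px (Px y) = Px y) (hPx1 : ‖Px‖ ≤ 1)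
    (hrange : LinearMap.range (Px : X →ₗ[ℂ] X) = Submodule.span ℂ {x})
    (ρ : ℝ) (hρ0 : 0 < ρ) (hρ1 : ρ ≤ 1 / 2) :
    ∀ y : X, ‖y‖ < 1 →
      ‖(((1 - ρ : ℝ) : ℂ)) • y + ((ρ : ℝ) : ℂ) • Px y‖ ≤
        ‖y‖ - ‖y‖ * modConv X (2 * ρ * ‖y - Px y‖) := by
  intro y hy
  by_cases h0 : y = 0
  · subst h0
    simp
  have hr : 0 < ‖y‖ := norm_pos_iff.mpr h0
  set r := ‖y‖ with hrdef
  have hPy : ‖Px y‖ ≤ r := by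
    have := Px.le_opNorm y
    nlinarith [norm_nonneg (Px y)]
  have hρ2 : 2 * ρ ≤ 1 := by linarith
  set u : X := ((r : ℂ))⁻¹ • y with hu_def
  set w : X := (((1 - 2 * ρ : ℝ) : ℂ)) • y + (((2 * ρ : ℝ) : ℂ)) • Px y with hw_def
  set v : X := ((r : ℂ))⁻¹ • w with hv_def
  have hnormr : ‖((r : ℂ))⁻¹‖ = r⁻¹ := by
    rw [norm_inv, Complex.norm_real, Real.norm_eq_abs, abs_of_pos hr]
  have hu1 : ‖u‖ = 1 := by
    rw [hu_def, norm_smul, hnormr, inv_mul_cancel₀ hr.ne']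
  have hw_le : ‖w‖ ≤ r := by
    calc ‖w‖ ≤ ‖(((1 - 2 * ρ : ℝ) : ℂ)) • y‖ + ‖(((2 * ρ : ℝ) : ℂ)) • Px y‖ :=
          norm_add_le _ _
      _ = (1 - 2 * ρ) * r + (2 * ρ) * ‖Px y‖ := by
          rw [norm_smul, norm_smul, Complex.norm_real, Complex.norm_real,
            Real.norm_eq_abs, Real.norm_eq_abs,
            abs_of_nonneg (by linarith), abs_of_nonneg (by linarith)]
      _ ≤ (1 - 2 * ρ) * r + (2 * ρ) * r := by nlinarith
      _ = r := by ring
  have hv1 : ‖v‖ ≤ 1 := by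
    rw [hv_def, norm_smul, hnormr]
    calc r⁻¹ * ‖w‖ ≤ r⁻¹ * r := by
          exact mul_le_mul_of_nonneg_left hw_le (by positivity)
      _ = 1 := inv_mul_cancel₀ hr.ne'
  have hsub : u - v = ((r : ℂ))⁻¹ • ((((2 * ρ : ℝ) : ℂ)) • (y - Px y)) := by
    rw [hu_def, hv_def, hw_def, ← smul_sub]
    congr 1
    push_cast
    module
  have hsubn : ‖u - v‖ = r⁻¹ * (2 * ρ * ‖y - Px y‖) := by
    rw [hsub, norm_smul, norm_smul, hnormr, Complex.norm_real,
      Real.norm_eq_abs, abs_of_nonneg (by linarith)]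
  have ht : 2 * ρ * ‖y - Px y‖ ≤ ‖u - v‖ := by
    rw [hsubn]
    have h1 : 1 ≤ r⁻¹ := by
      rw [le_inv_comm₀ one_pos hr]
      simpa using hy.le
    nlinarith [norm_nonneg (y - Px y), mul_nonneg hρ0.le (norm_nonneg (y - Px y))]
  have hsum : u + v = ((r : ℂ))⁻¹ • ((2 : ℂ) •
      ((((1 - ρ : ℝ) : ℂ)) • y + (((ρ : ℝ) : ℂ)) • Px y)) := by
    rw [hu_def, hv_def, hw_def, ← smul_add]
    congr 1
    push_cast
    module
  have hsumn : ‖u + v‖ = r⁻¹ * (2 * ‖(((1 - ρ : ℝ) : ℂ)) • y + (((ρ : ℝ) : ℂ)) • Px y‖) := by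
    rw [hsum, norm_smul, norm_smul, hnormr]
    norm_num
  have key := modConv_le_of_mem hu1.le hv1 ht
  rw [hsumn] at key
  have hrr : r * r⁻¹ = 1 := mul_inv_cancel₀ hr.ne'
  nlinarith [norm_nonneg ((((1 - ρ : ℝ) : ℂ)) • y + (((ρ : ℝ) : ℂ)) • Px y)]
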